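/- arXiv:1412.6882 — 2 statements merged into one kernel-verified Lean document; each statement's English description precedes it below -/
import Mathlib

section
/- Let γ_B ~ Gamma(shape m_B, rate λ_B) and γ_E ~ Gamma(shape m_E, rate λ_E) be independent. Then P(γ_B ≤ γ_E) = (λ_B^{m_B} λ_E^{m_E}/Γ(m_E)) ∑_{n=0}^∞ [λ_B^n / Γ(m_B+n+1)] · Γ(m_B+m_E+n)/(λ_B+λ_E)^{m_B+m_E+n}, where the series converges. -/
/-!
Write `F_a` for the distribution function of `Gamma(a, r)`. Integrating by parts,
`F_a(x) = (r x)^a e^{-r x} / Γ(a + 1) + F_{a+1}(x)`, and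
`F_{a+N}(x) ≤ e^{r x} (r x)^{a+N} / Γ(a+N+1)`, which tends to `0`; so `F_a(x)` is the sum of the
terms `(r x)^{a+n} e^{-r x} / Γ(a+n+1)`.
By independence `P(X ≤ Y) = E[F_{m_B}(Y)]`, and integrating the series term by term against the
density of `Y`, each term is a Gamma integral `∫ y^{m_B+m_E+n-1} e^{-(λ_B+λ_E) y} dy`.
-/

open MeasureTheory ProbabilityTheory Real Set Filter Topology
open scoped ENNReal

namespace ProbabilityTheory

variable {a r x : ℝ}

lemma measurable_gammaPDF (a r : ℝ) : Measurable (gammaPDF a r) :=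
  (measurable_gammaPDFReal a r).ennreal_ofReal

lemma integrable_gammaPDFReal (ha : 0 < a) (hr : 0 < r) : Integrable (gammaPDFReal a r) := by
  have h := integrable_toReal_of_lintegral_ne_top (measurable_gammaPDF a r).aemeasurable
    (by rw [lintegral_gammaPDF_eq_one ha hr]; exact ENNReal.one_ne_top)
  simpa only [gammaPDF, ENNReal.toReal_ofReal (gammaPDFReal_nonneg ha hr _)] using h

lemma cdf_gammaMeasure_eq_intervalIntegral (ha : 0 < a) (hr : 0 < r) (x : ℝ) :
    cdf (gammaMeasure a r) x = ∫ t in 0..x, gammaPDFReal a r t := by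
  have hint := integrable_gammaPDFReal ha hr
  have h0 : ∫ t in Iic 0, gammaPDFReal a r t = 0 := by
    rw [integral_Iic_eq_integral_Iio]
    exact setIntegral_eq_zero_of_forall_eq_zero fun t (ht : t < 0) => if_neg ht.not_ge
  rw [cdf_gammaMeasure_eq_integral ha hr, ← intervalIntegral.integral_Iic_sub_Iic
    hint.integrableOn hint.integrableOn, h0, sub_zero]

noncomputable def gammaCDFTerm (s r x : ℝ) : ℝ :=
  r ^ s / Gamma (s + 1) * (x ^ s * exp (-(r * x)))

lemma gammaCDFTerm_nonneg {s : ℝ} (hs : 0 < s) (hr : 0 < r) (hx : 0 ≤ x) :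
    0 ≤ gammaCDFTerm s r x := by
  have := Gamma_pos_of_pos (by linarith : 0 < s + 1)
  unfold gammaCDFTerm
  positivity

lemma continuous_gammaCDFTerm (ha : 0 ≤ a) (r : ℝ) : Continuous (gammaCDFTerm a r) := by
  unfold gammaCDFTerm
  have := continuous_rpow_const ha
  fun_prop

lemma hasDerivAt_gammaCDFTerm (ha : 0 < a) (hr : 0 < r) (hx : 0 < x) :
    HasDerivAt (gammaCDFTerm a r) (gammaPDFReal a r x - gammaPDFReal (a + 1) r x) x := by
  have hpow : HasDerivAt (fun t : ℝ => t ^ a) (a * x ^ (a - 1)) x :=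
    hasDerivAt_rpow_const (Or.inl hx.ne')
  have hexp : HasDerivAt (fun t : ℝ => exp (-(r * t))) (exp (-(r * x)) * -(r * 1)) x :=
    ((hasDerivAt_id x).const_mul r).neg.exp
  refine ((hpow.mul hexp).const_mul (r ^ a / Gamma (a + 1))).congr_deriv ?_
  have hΓ : Gamma a ≠ 0 := (Gamma_pos_of_pos ha).ne'
  simp only [gammaPDFReal, if_pos hx.le, add_sub_cancel_right, rpow_add_one hr.ne',
    Gamma_add_one ha.ne']
  field_simp
  ring

lemma cdf_gammaMeasure_eq_gammaCDFTerm_add (ha : 0 < a) (hr : 0 < r) (hx : 0 ≤ x) :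
    cdf (gammaMeasure a r) x = gammaCDFTerm a r x + cdf (gammaMeasure (a + 1) r) x := by
  have hFTC := intervalIntegral.integral_eq_sub_of_hasDeriv_right_of_le hx
    (continuous_gammaCDFTerm ha.le r).continuousOn
    (fun t ht => (hasDerivAt_gammaCDFTerm ha hr ht.1).hasDerivWithinAt)
    ((integrable_gammaPDFReal ha hr).intervalIntegrable.sub
      (integrable_gammaPDFReal (by linarith) hr).intervalIntegrable)
  have h0 : gammaCDFTerm a r 0 = 0 := by simp [gammaCDFTerm, zero_rpow ha.ne']
  rw [intervalIntegral.integral_sub (integrable_gammaPDFReal ha hr).intervalIntegrable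
    (integrable_gammaPDFReal (by linarith) hr).intervalIntegrable, h0, sub_zero] at hFTC
  rw [cdf_gammaMeasure_eq_intervalIntegral ha hr,
    cdf_gammaMeasure_eq_intervalIntegral (by linarith) hr]
  linarith

lemma cdf_gammaMeasure_le (ha : 0 < a) (hr : 0 < r) (hx : 0 ≤ x) :
    cdf (gammaMeasure a r) x ≤ exp (r * x) * gammaCDFTerm a r x := by
  have hΓ : 0 < Gamma a := Gamma_pos_of_pos ha
  have hbound : IntervalIntegrable (fun t : ℝ => r ^ a / Gamma a * t ^ (a - 1)) volume 0 x :=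
    (intervalIntegral.intervalIntegrable_rpow' (by linarith)).const_mul _
  calc cdf (gammaMeasure a r) x ≤ ∫ t in 0..x, r ^ a / Gamma a * t ^ (a - 1) := by
        rw [cdf_gammaMeasure_eq_intervalIntegral ha hr]
        refine intervalIntegral.integral_mono_on hx
          (integrable_gammaPDFReal ha hr).intervalIntegrable hbound fun t ht => ?_
        rw [gammaPDFReal, if_pos ht.1]
        have : exp (-(r * t)) ≤ 1 := exp_le_one_iff.mpr (by nlinarith [ht.1])
        have : 0 ≤ r ^ a / Gamma a * t ^ (a - 1) := by
          have := rpow_nonneg ht.1 (a - 1)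
          positivity
        nlinarith
    _ = exp (r * x) * gammaCDFTerm a r x := by
        rw [intervalIntegral.integral_const_mul, integral_rpow (Or.inl (by linarith)),
          sub_add_cancel, zero_rpow ha.ne', sub_zero, gammaCDFTerm, Gamma_add_one ha.ne']
        have hexp : exp (r * x) * exp (-(r * x)) = 1 := by
          rw [← exp_add, add_neg_cancel, exp_zero]
        linear_combination (-(r ^ a / (a * Gamma a) * x ^ a)) * hexp

lemma cdf_gammaMeasure_eq_sum_add (ha : 0 < a) (hr : 0 < r) (hx : 0 ≤ x) (N : ℕ) :
    cdf (gammaMeasure a r) x =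
      ∑ n ∈ Finset.range N, gammaCDFTerm (a + n) r x + cdf (gammaMeasure (a + N) r) x := by
  induction N with
  | zero => simp
  | succ N ih =>
    rw [Finset.sum_range_succ, ih, cdf_gammaMeasure_eq_gammaCDFTerm_add (by positivity) hr hx]
    push_cast
    ring_nf

lemma hasSum_gammaCDFTerm (ha : 0 < a) (hr : 0 < r) (hx : 0 ≤ x) :
    HasSum (fun n : ℕ => gammaCDFTerm (a + n) r x) (cdf (gammaMeasure a r) x) := by
  have hnonneg (n : ℕ) : 0 ≤ gammaCDFTerm (a + n) r x :=
    gammaCDFTerm_nonneg (by positivity) hr hx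
  -- the partial sums are bounded by `F_a(x)`, so the terms, and with them the tails, tend to 0
  have hsum : Summable fun n : ℕ => gammaCDFTerm (a + n) r x :=
    summable_of_sum_range_le (c := cdf (gammaMeasure a r) x) hnonneg fun N => by
      linarith [cdf_gammaMeasure_eq_sum_add ha hr hx N, cdf_nonneg (gammaMeasure (a + N) r) x]
  have htail : Tendsto (fun N : ℕ => cdf (gammaMeasure (a + N) r) x) atTop (𝓝 0) := by
    refine squeeze_zero (fun N => cdf_nonneg _ x)
      (fun N => cdf_gammaMeasure_le (by positivity) hr hx) ?_
    simpa using hsum.tendsto_atTop_zero.const_mul (exp (r * x))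
  rw [hsum.hasSum_iff_tendsto_nat]
  have hlim := (tendsto_const_nhds (x := cdf (gammaMeasure a r) x)).sub htail
  rw [sub_zero] at hlim
  exact hlim.congr fun N => by linarith [cdf_gammaMeasure_eq_sum_add ha hr hx N]

lemma gammaMeasure_Iic_eq_tsum (ha : 0 < a) (hr : 0 < r) (hx : 0 ≤ x) :
    gammaMeasure a r (Iic x) = ∑' n : ℕ, ENNReal.ofReal (gammaCDFTerm (a + n) r x) := by
  have := isProbabilityMeasure_gammaMeasure ha hr
  have hsum := hasSum_gammaCDFTerm ha hr hx
  rw [← ofReal_cdf, ← hsum.tsum_eq, ENNReal.ofReal_tsum_of_nonneg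
    (fun n => gammaCDFTerm_nonneg (by positivity) hr hx) hsum.summable]

lemma ae_nonneg_gammaMeasure (a r : ℝ) : ∀ᵐ x ∂gammaMeasure a r, 0 ≤ x := by
  simp only [ae_iff, not_le]
  rw [show {x : ℝ | x < 0} = Iio 0 from rfl, gammaMeasure, withDensity_apply _ measurableSet_Iio]
  exact lintegral_gammaPDF_of_nonpos le_rfl

lemma gammaPDFReal_mul_rpow_mul_exp {b c : ℝ} (hac : 0 < a + c) (hrb : 0 < r + b) (hx : x ≠ 0) :
    gammaPDFReal a r x * (x ^ c * exp (-(b * x))) =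
      r ^ a * Gamma (a + c) / (Gamma a * (r + b) ^ (a + c)) * gammaPDFReal (a + c) (r + b) x := by
  rcases hx.lt_or_gt with hneg | hpos
  · simp [gammaPDFReal, hneg.not_ge]
  have hΓ : Gamma (a + c) ≠ 0 := (Gamma_pos_of_pos hac).ne'
  have hpow : (r + b) ^ (a + c) ≠ 0 := (rpow_pos_of_pos hrb _).ne'
  have hx_pow : x ^ (a + c - 1) = x ^ (a - 1) * x ^ c := by
    rw [← rpow_add hpos]; ring_nf
  have hexp : exp (-((r + b) * x)) = exp (-(r * x)) * exp (-(b * x)) := by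
    rw [← exp_add]; ring_nf
  simp only [gammaPDFReal, if_pos hpos.le, hx_pow, hexp]
  field_simp

lemma lintegral_rpow_mul_exp_gammaMeasure {b c : ℝ} (ha : 0 < a) (hr : 0 < r) (hac : 0 < a + c)
    (hrb : 0 < r + b) :
    ∫⁻ x, ENNReal.ofReal (x ^ c * exp (-(b * x))) ∂gammaMeasure a r =
      ENNReal.ofReal (r ^ a * Gamma (a + c) / (Gamma a * (r + b) ^ (a + c))) := by
  have hK : 0 ≤ r ^ a * Gamma (a + c) / (Gamma a * (r + b) ^ (a + c)) := by
    have := Gamma_pos_of_pos ha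
    have := Gamma_pos_of_pos hac
    positivity
  have hdensity : ∀ᵐ x, gammaPDF a r x * ENNReal.ofReal (x ^ c * exp (-(b * x))) =
      ENNReal.ofReal (r ^ a * Gamma (a + c) / (Gamma a * (r + b) ^ (a + c))) *
        gammaPDF (a + c) (r + b) x := by
    filter_upwards [Measure.ae_ne volume 0] with x hx
    rw [gammaPDF, gammaPDF, ← ENNReal.ofReal_mul (gammaPDFReal_nonneg ha hr x),
      ← ENNReal.ofReal_mul hK, gammaPDFReal_mul_rpow_mul_exp hac hrb hx]
  rw [gammaMeasure, lintegral_withDensity_eq_lintegral_mul _ (measurable_gammaPDF a r)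
      (by fun_prop), Pi.mul_def, lintegral_congr_ae hdensity,
    lintegral_const_mul _ (measurable_gammaPDF _ _), lintegral_gammaPDF_eq_one hac hrb, mul_one]

lemma lintegral_gammaCDFTerm_gammaMeasure {b s : ℝ} (ha : 0 < a) (hr : 0 < r) (hb : 0 < b)
    (hs : 0 < s) :
    ∫⁻ y, ENNReal.ofReal (gammaCDFTerm s b y) ∂gammaMeasure a r =
      ENNReal.ofReal
        (b ^ s / Gamma (s + 1) * (r ^ a * Gamma (a + s) / (Gamma a * (r + b) ^ (a + s)))) := by
  have hc : 0 ≤ b ^ s / Gamma (s + 1) := by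
    have := Gamma_pos_of_pos (by linarith : 0 < s + 1)
    positivity
  simp_rw [gammaCDFTerm, ENNReal.ofReal_mul hc]
  rw [lintegral_const_mul _ (by fun_prop), lintegral_rpow_mul_exp_gammaMeasure ha hr
    (by linarith) (by linarith), ← ENNReal.ofReal_mul hc]

lemma measure_le_eq_lintegral_map_Iic {Ω : Type*} [MeasurableSpace Ω] {μ : Measure Ω}
    [IsFiniteMeasure μ] {X Y : Ω → ℝ} (hX : Measurable X) (hY : Measurable Y)
    (hXY : IndepFun X Y μ) :
    μ {ω | X ω ≤ Y ω} = ∫⁻ y, μ.map X (Iic y) ∂μ.map Y := by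
  have hS : MeasurableSet {p : ℝ × ℝ | p.2 ≤ p.1} :=
    measurableSet_le measurable_snd measurable_fst
  have hmap :=
    (indepFun_iff_map_prod_eq_prod_map_map hY.aemeasurable hX.aemeasurable).mp hXY.symm
  calc μ {ω | X ω ≤ Y ω} = μ.map (fun ω => (Y ω, X ω)) {p | p.2 ≤ p.1} :=
        (Measure.map_apply (hY.prodMk hX) hS).symm
    _ = ∫⁻ y, μ.map X (Iic y) ∂μ.map Y := by rw [hmap, Measure.prod_apply hS]; rfl

end ProbabilityTheory

lemma ENNReal.hasSum_toReal_tsum_ofReal {α : Type*} {f : α → ℝ} (hf : ∀ i, 0 ≤ f i)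
    (h : ∑' i, ENNReal.ofReal (f i) ≠ ∞) :
    HasSum f (∑' i, ENNReal.ofReal (f i)).toReal := by
  rw [ENNReal.tsum_toReal_eq fun _ => ENNReal.ofReal_ne_top]
  simpa only [ENNReal.toReal_ofReal (hf _)] using ENNReal.hasSum_toReal h

theorem stmt12 {Ω : Type*} [MeasurableSpace Ω] (μ : Measure Ω) [IsProbabilityMeasure μ]
    (X Y : Ω → ℝ) (mB mE lB lE : ℝ)
    (hmB : 0 < mB) (hmE : 0 < mE) (hlB : 0 < lB) (hlE : 0 < lE)
    (hXm : Measurable X) (hYm : Measurable Y)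
    (hindep : IndepFun X Y μ)
    (hX : Measure.map X μ = gammaMeasure mB lB)
    (hY : Measure.map Y μ = gammaMeasure mE lE) :
    HasSum (fun n : ℕ =>
        lB ^ mB * lE ^ mE / Real.Gamma mE *
          (lB ^ (n : ℝ) / Real.Gamma (mB + n + 1)) *
          (Real.Gamma (mB + mE + n) / (lB + lE) ^ (mB + mE + n)))
      ((μ {ω | X ω ≤ Y ω}).toReal) := by
  set f : ℕ → ℝ := fun n => lB ^ mB * lE ^ mE / Gamma mE *
    (lB ^ (n : ℝ) / Gamma (mB + n + 1)) * (Gamma (mB + mE + n) / (lB + lE) ^ (mB + mE + n))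
  have hterm (n : ℕ) :
      ∫⁻ y, ENNReal.ofReal (gammaCDFTerm (mB + n) lB y) ∂gammaMeasure mE lE =
        ENNReal.ofReal (f n) := by
    rw [lintegral_gammaCDFTerm_gammaMeasure hmE hlE hlB (by positivity), rpow_add hlB,
      add_comm lE lB, show mE + (mB + n) = mB + mE + n by ring]
    congr 1
    ring
  have hP : μ {ω | X ω ≤ Y ω} = ∑' n, ENNReal.ofReal (f n) := by
    rw [measure_le_eq_lintegral_map_Iic hXm hYm hindep, hX, hY, lintegral_congr_ae
      ((ae_nonneg_gammaMeasure mE lE).mono fun y hy => gammaMeasure_Iic_eq_tsum hmB hlB hy),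
      lintegral_tsum fun n =>
        (continuous_gammaCDFTerm (by positivity) lB).measurable.ennreal_ofReal.aemeasurable]
    exact tsum_congr hterm
  rw [hP]
  exact ENNReal.hasSum_toReal_tsum_ofReal (fun n => by positivity) (hP ▸ measure_ne_top μ _)
end

section
/- For a Gamma random variable γ_B with shape m and mean γ̄_B (rate m/γ̄_B), and any fixed threshold t > 0, the outage probability P(γ_B < t) = γ(m, m t/γ̄_B)/Γ(m) satisfies lim_{γ̄_B → ∞} log P(γ_B < t) / log(1/γ̄_B) = m; i.e., P(γ_B < t) decays as Θ(γ̄_B^{−m}) as γ̄_B → ∞ (the diversity order is m). -/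
open Real MeasureTheory Filter

lemma aux_integrable (m : ℝ) (hm : 0 < m) (x : ℝ) (hx : 0 < x) :
    IntervalIntegrable (fun s => Real.exp (-s) * s ^ (m - 1)) volume 0 x := by
  rw [intervalIntegrable_iff_integrableOn_Ioc_of_le hx.le]
  exact (Real.GammaIntegral_convergent hm).mono_set Set.Ioc_subset_Ioi_self

lemma aux_rpow_int (m : ℝ) (hm : 0 < m) (x : ℝ) (hx : 0 < x) :
    (∫ s in (0:ℝ)..x, s ^ (m - 1)) = x ^ m / m := by
  rw [integral_rpow (Or.inl (by linarith))]
  rw [show m - 1 + 1 = m by ring, Real.zero_rpow hm.ne']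
  ring

lemma aux_upper (m : ℝ) (hm : 0 < m) (x : ℝ) (hx : 0 < x) :
    (∫ s in (0:ℝ)..x, Real.exp (-s) * s ^ (m - 1)) ≤ x ^ m / m := by
  rw [← aux_rpow_int m hm x hx]
  apply intervalIntegral.integral_mono_on hx.le (aux_integrable m hm x hx)
    (intervalIntegral.intervalIntegrable_rpow' (by linarith))
  intro s hs
  have hs0 : (0:ℝ) ≤ s ^ (m - 1) := Real.rpow_nonneg hs.1 _
  nlinarith [Real.exp_le_one_iff.mpr (neg_nonpos_of_nonneg hs.1), Real.exp_pos (-s)]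

lemma aux_lower (m : ℝ) (hm : 0 < m) (x : ℝ) (hx : 0 < x) :
    Real.exp (-x) * (x ^ m / m) ≤ ∫ s in (0:ℝ)..x, Real.exp (-s) * s ^ (m - 1) := by
  have h1 : IntervalIntegrable (fun s : ℝ => s ^ (m - 1)) volume 0 x :=
    intervalIntegral.intervalIntegrable_rpow' (by linarith)
  have := intervalIntegral.integral_mono_on hx.le (h1.const_mul (Real.exp (-x)))
    (aux_integrable m hm x hx) (f := fun s => Real.exp (-x) * s ^ (m - 1))
    (fun s hs => by
      have hs0 : (0:ℝ) ≤ s ^ (m - 1) := Real.rpow_nonneg hs.1 _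
      exact mul_le_mul_of_nonneg_right (Real.exp_le_exp.2 (neg_le_neg hs.2)) hs0)
  calc Real.exp (-x) * (x ^ m / m)
      = ∫ s in (0:ℝ)..x, Real.exp (-x) * s ^ (m - 1) := by
        rw [intervalIntegral.integral_const_mul, aux_rpow_int m hm x hx]
    _ ≤ _ := this

theorem stmt19 (m t : ℝ) (hm : 0 < m) (ht : 0 < t) :
    Filter.Tendsto (fun γbar : ℝ =>
        Real.log ((∫ s in (0:ℝ)..(m * t / γbar), Real.exp (-s) * s ^ (m - 1)) /
            Real.Gamma m) / Real.log (1 / γbar))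
      Filter.atTop (nhds m) := by
  have hΓ : 0 < Real.Gamma m := Real.Gamma_pos_of_pos hm
  have hmt : 0 < m * t := mul_pos hm ht
  set C : ℝ := m * Real.log (m * t) - Real.log m - Real.log (Real.Gamma m) with hC
  have hinv : Tendsto (fun γ : ℝ => C / Real.log γ) atTop (nhds 0) :=
    Tendsto.div_atTop tendsto_const_nhds Real.tendsto_log_atTop
  have hx0 : Tendsto (fun γ : ℝ => m * t / γ) atTop (nhds 0) :=
    Tendsto.div_atTop tendsto_const_nhds tendsto_id
  have hx0' : Tendsto (fun γ : ℝ => (m * t / γ) / Real.log γ) atTop (nhds 0) :=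
    Tendsto.div_atTop hx0 Real.tendsto_log_atTop
  have hlo : Tendsto (fun γ : ℝ => m - C / Real.log γ) atTop (nhds m) := by
    simpa using tendsto_const_nhds.sub hinv
  have hhi : Tendsto (fun γ : ℝ => m - C / Real.log γ + (m * t / γ) / Real.log γ)
      atTop (nhds m) := by
    simpa using hlo.add hx0'
  apply tendsto_of_tendsto_of_tendsto_of_le_of_le' hlo hhi
  all_goals {
    filter_upwards [eventually_ge_atTop (2:ℝ)] with γ hγ
    have hγ0 : (0:ℝ) < γ := by linarith
    have hg : 0 < Real.log γ := Real.log_pos (by linarith)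
    set x : ℝ := m * t / γ with hxdef
    have hx : 0 < x := div_pos hmt hγ0
    set I : ℝ := ∫ s in (0:ℝ)..x, Real.exp (-s) * s ^ (m - 1) with hI
    have hlb := aux_lower m hm x hx
    have hub := aux_upper m hm x hx
    have hIpos : 0 < I :=
      lt_of_lt_of_le (mul_pos (Real.exp_pos _) (div_pos (Real.rpow_pos_of_pos hx m) hm)) hlb
    have hlogx : Real.log x = Real.log (m * t) - Real.log γ :=
      Real.log_div hmt.ne' hγ0.ne'
    have hlogpow : Real.log (x ^ m / m) = m * Real.log x - Real.log m := by
      rw [Real.log_div (by positivity) hm.ne', Real.log_rpow hx]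
    have hfexpr : Real.log (I / Real.Gamma m) / Real.log (1 / γ)
        = (Real.log (Real.Gamma m) - Real.log I) / Real.log γ := by
      rw [Real.log_div hIpos.ne' hΓ.ne', one_div, Real.log_inv]
      rw [div_neg]
      ring
    have hubl : Real.log I ≤ m * Real.log x - Real.log m := by
      calc Real.log I ≤ Real.log (x ^ m / m) := Real.log_le_log hIpos hub
        _ = _ := hlogpow
    have hlbl : -x + (m * Real.log x - Real.log m) ≤ Real.log I := by
      calc -x + (m * Real.log x - Real.log m)
          = Real.log (Real.exp (-x) * (x ^ m / m)) := by
            rw [Real.log_mul (Real.exp_ne_zero _) (by positivity), Real.log_exp, hlogpow]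
        _ ≤ Real.log I := Real.log_le_log (by positivity) hlb
    rw [hfexpr]
    have key1 : m - C / Real.log γ ≤ (Real.log (Real.Gamma m) - Real.log I) / Real.log γ := by
      rw [le_div_iff₀ hg]
      have he : (m - C / Real.log γ) * Real.log γ = m * Real.log γ - C := by field_simp
      rw [he]
      rw [hlogx] at hubl
      simp only [hC]
      linarith
    have key2 : (Real.log (Real.Gamma m) - Real.log I) / Real.log γ
        ≤ m - C / Real.log γ + x / Real.log γ := by
      rw [div_le_iff₀ hg]
      have he : (m - C / Real.log γ + x / Real.log γ) * Real.log γ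
          = m * Real.log γ - C + x := by field_simp; try ring
      rw [he]
      rw [hlogx] at hlbl
      simp only [hC]
      linarith
    first | exact key1 | exact key2
  }
end
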